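/- Let (Z_k)_{k≥0} be a stationary Gaussian sequence with E[Z_0^2] < ∞, λ > 0, q an even positive integer, and R_{P,q}(λ, Z_k) := (Z_k − e^{−λk}Z_0)^q − Z_k^q. Then for every ε > 0, n^{−ε} Σ_{k=0}^{n−1} R_{P,q}(λ, Z_k) → 0 almost surely as n → ∞. -/

import Mathlib

/-!
Stationarity makes every `Z k` distributed like the integrable `Z 0`, so the events `|Z k| > k`
have summable probabilities and, by Borel–Cantelli, almost surely `|Z k| ≤ k` for all large `k`.
On such a path the `k`-th remainder is at most a polynomial in `k` times `e^{-λk}`, so the series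
of remainders converges absolutely; its partial sums stay bounded and are killed by `n^{-ε}`.
-/

open MeasureTheory ProbabilityTheory Filter Topology

theorem identDistrib_of_map_shift_eq {Ω E : Type*} [MeasurableSpace Ω] [MeasurableSpace E]
    {μ : Measure Ω} {Z : ℕ → Ω → E} (hZ : ∀ k, Measurable (Z k)) {m : ℕ}
    (h : μ.map (fun ω i => Z (i + m) ω) = μ.map (fun ω i => Z i ω)) :
    IdentDistrib (Z m) (Z 0) μ μ := by
  have hshift : IdentDistrib (fun ω i => Z (i + m) ω) (fun ω i => Z i ω) μ μ :=
    ⟨(measurable_pi_lambda _ fun i => hZ (i + m)).aemeasurable,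
      (measurable_pi_lambda _ hZ).aemeasurable, h⟩
  simpa [Function.comp_def] using hshift.comp (measurable_pi_apply 0)

theorem ae_eventually_abs_le_of_identDistrib {Ω : Type*} [MeasureSpace Ω]
    [IsProbabilityMeasure (ℙ : Measure Ω)] {X : ℕ → Ω → ℝ} (hint : Integrable (X 0))
    (hident : ∀ k, IdentDistrib (X k) (X 0)) :
    ∀ᵐ ω, ∀ᶠ k in atTop, |X k ω| ≤ k := by
  have hsum : ∑' k : ℕ, ℙ {ω | |X k ω| ∈ Set.Ioi (k : ℝ)} < ⊤ := by
    refine (tsum_congr fun k => ?_).trans_lt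
      (tsum_prob_mem_Ioi_lt_top hint.abs fun ω => abs_nonneg (X 0 ω))
    exact ((hident k).comp measurable_abs).measure_mem_eq measurableSet_Ioi
  filter_upwards [ae_eventually_notMem hsum.ne] with ω hω
  simpa using hω

theorem summable_sub_geometric_mul_pow_sub_pow {x : ℕ → ℝ}
    (hx : ∀ᶠ k in atTop, |x k| ≤ k) (q : ℕ) (c : ℝ) {r : ℝ} (hr0 : 0 ≤ r)
    (hr1 : r < 1) :
    Summable fun k => (x k - r ^ k * c) ^ q - x k ^ q := by
  set C := q * |c| * (1 + |c|) ^ (q - 1)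
  have hgeom : Summable fun k : ℕ => C * ((k : ℝ) ^ (q - 1) * r ^ k) :=
    (summable_pow_mul_geometric_of_norm_lt_one (q - 1)
      (by rwa [Real.norm_of_nonneg hr0])).mul_left C
  refine hgeom.of_norm_bounded_eventually_nat ?_
  filter_upwards [hx, eventually_ge_atTop 1] with k hxk hk
  have hrk : r ^ k ≤ 1 := pow_le_one₀ hr0 hr1.le
  have hk' : (1 : ℝ) ≤ k := by exact_mod_cast hk
  have hshift : |r ^ k * c| = r ^ k * |c| := by rw [abs_mul, abs_of_nonneg (pow_nonneg hr0 k)]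
  have hmax : max |x k - r ^ k * c| |x k| ≤ (1 + |c|) * k := by
    have : r ^ k * |c| ≤ |c| := mul_le_of_le_one_left (abs_nonneg c) hrk
    refine max_le ((abs_sub _ _).trans ?_) ?_ <;> nlinarith [abs_nonneg c]
  calc ‖(x k - r ^ k * c) ^ q - x k ^ q‖
      ≤ |x k - r ^ k * c - x k| * q * max |x k - r ^ k * c| |x k| ^ (q - 1) :=
        abs_pow_sub_pow_le ..
    _ ≤ r ^ k * |c| * q * ((1 + |c|) * k) ^ (q - 1) := by
        rw [sub_sub_cancel_left, abs_neg, hshift]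
        gcongr
    _ = C * ((k : ℝ) ^ (q - 1) * r ^ k) := by rw [mul_pow]; ring

theorem Summable.tendsto_rpow_neg_mul_sum_range {f : ℕ → ℝ} (hf : Summable f) {ε : ℝ}
    (hε : 0 < ε) :
    Tendsto (fun n : ℕ => (n : ℝ) ^ (-ε) * ∑ k ∈ Finset.range n, f k) atTop (𝓝 0) := by
  have hpow : Tendsto (fun n : ℕ => (n : ℝ) ^ (-ε)) atTop (𝓝 0) :=
    (tendsto_rpow_neg_atTop hε).comp tendsto_natCast_atTop_atTop
  simpa using hpow.mul hf.hasSum.tendsto_sum_nat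

theorem as_convergence_power_remainder_sum_general
    {Ω : Type*} [MeasureSpace Ω] [IsProbabilityMeasure (ℙ : Measure Ω)]
    (Z : ℕ → Ω → ℝ) (hmeas : ∀ k, Measurable (Z k))
    (hStat : ∀ m : ℕ, Measure.map (fun ω (i : ℕ) => Z (i + m) ω) ℙ
      = Measure.map (fun ω (i : ℕ) => Z i ω) ℙ)
    (hL2 : Integrable (fun ω => (Z 0 ω) ^ 2) ℙ)
    (lam : ℝ) (hlam : 0 < lam) (q : ℕ) :
    ∀ ε : ℝ, 0 < ε → ∀ᵐ ω ∂ℙ,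
      Tendsto (fun n : ℕ => (n : ℝ) ^ (-ε) * ∑ k ∈ Finset.range n,
          ((Z k ω - Real.exp (-lam * k) * Z 0 ω) ^ q - (Z k ω) ^ q))
        atTop (nhds 0) := by
  intro ε hε
  have hint : Integrable (Z 0) :=
    ((memLp_two_iff_integrable_sq (hmeas 0).aestronglyMeasurable).mpr hL2).integrable one_le_two
  have hident : ∀ k, IdentDistrib (Z k) (Z 0) := fun k =>
    identDistrib_of_map_shift_eq hmeas (hStat k)
  have hexp : ∀ k : ℕ, Real.exp (-lam * k) = Real.exp (-lam) ^ k := fun k => by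
    rw [← Real.exp_nat_mul, mul_comm]
  have hr1 : Real.exp (-lam) < 1 := Real.exp_lt_one_iff.mpr (neg_neg_of_pos hlam)
  filter_upwards [ae_eventually_abs_le_of_identDistrib hint hident] with ω hω
  simp_rw [hexp]
  exact (summable_sub_geometric_mul_pow_sub_pow hω q (Z 0 ω) (Real.exp_pos _).le hr1
    ).tendsto_rpow_neg_mul_sum_range hε

theorem as_convergence_power_remainder_sum
    {Ω : Type*} [MeasureSpace Ω] [IsProbabilityMeasure (ℙ : Measure Ω)]
    (Z : ℕ → Ω → ℝ) (hmeas : ∀ k, Measurable (Z k))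
    (hGauss : ∀ (s : Finset ℕ) (c : ℕ → ℝ), ∃ v : NNReal,
      Measure.map (fun ω => ∑ i ∈ s, c i * Z i ω) ℙ = gaussianReal 0 v)
    (hStat : ∀ m : ℕ, Measure.map (fun ω (i : ℕ) => Z (i + m) ω) ℙ
      = Measure.map (fun ω (i : ℕ) => Z i ω) ℙ)
    (hL2 : Integrable (fun ω => (Z 0 ω) ^ 2) ℙ)
    (lam : ℝ) (hlam : 0 < lam) (q : ℕ) (hq : Even q) (hq0 : 0 < q) :
    ∀ ε : ℝ, 0 < ε → ∀ᵐ ω ∂ℙ,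
      Tendsto (fun n : ℕ => (n : ℝ) ^ (-ε) * ∑ k ∈ Finset.range n,
          ((Z k ω - Real.exp (-lam * k) * Z 0 ω) ^ q - (Z k ω) ^ q))
        atTop (nhds 0) :=
  as_convergence_power_remainder_sum_general Z hmeas hStat hL2 lam hlam q
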